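/- arXiv:1709.01962 — 8 statements merged into one kernel-verified Lean document; each statement's English description precedes it below -/
import Mathlib

section
/- Let d < c < e be reals and let F : [d,e] → ℝ be continuous, affine on [d,c] with slope of absolute value α > 0 and affine on [c,e] with slope of absolute value β > 0. If 1/α + 1/β < 1, then for every λ with 1/α + 1/β < λ < 1 and every segment [a,b] ⊆ [d,e] with a < b, one has b − a < λ·|F([a,b])|, where |F([a,b])| denotes the length (diameter) of the interval F([a,b]). -/
open Set Metric

/-!
On a piece where `F` has slope `m`, the image of a subsegment of length `ℓ` already has
length `|m| ℓ`, so that piece of `[a, b]` has length at most `diam F([a, b]) / |m|`. The segment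
`[a, b]` meets at most two pieces, hence `b - a ≤ (1/α + 1/β) · diam F([a, b])`; the diameter
is positive because `b - a` is, and `1/α + 1/β < λ` makes the inequality strict.
-/

section

variable {F : ℝ → ℝ} {s : Set ℝ} {m b₀ x y : ℝ}

lemma sub_le_diam_image_div_abs (hs : Bornology.IsBounded (F '' s)) (hm : m ≠ 0)
    (hxy : x ≤ y) (hx : x ∈ s) (hy : y ∈ s) (hFx : F x = m * x + b₀) (hFy : F y = m * y + b₀) :
    y - x ≤ diam (F '' s) / |m| := by
  rw [le_div_iff₀ (abs_pos.mpr hm)]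
  calc (y - x) * |m| = dist (F y) (F x) := by
        rw [Real.dist_eq, hFx, hFy, ← abs_of_nonneg (sub_nonneg.mpr hxy), ← abs_mul]
        ring_nf
    _ ≤ diam (F '' s) := dist_le_diam_of_mem hs (mem_image_of_mem F hy) (mem_image_of_mem F hx)

lemma sub_le_inv_add_inv_mul_diam_image {a b c m₁ b₁ m₂ b₂ : ℝ}
    (hbdd : Bornology.IsBounded (F '' Icc a b)) (hab : a ≤ b) (hm₁ : m₁ ≠ 0) (hm₂ : m₂ ≠ 0)
    (hF₁ : ∀ x ∈ Icc a b, x ≤ c → F x = m₁ * x + b₁)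
    (hF₂ : ∀ x ∈ Icc a b, c ≤ x → F x = m₂ * x + b₂) :
    b - a ≤ (1 / |m₁| + 1 / |m₂|) * diam (F '' Icc a b) := by
  set D := diam (F '' Icc a b)
  have hD₁ : 0 ≤ D / |m₁| := div_nonneg diam_nonneg (abs_nonneg _)
  have hD₂ : 0 ≤ D / |m₂| := div_nonneg diam_nonneg (abs_nonneg _)
  have ha : a ∈ Icc a b := left_mem_Icc.mpr hab
  have hb : b ∈ Icc a b := right_mem_Icc.mpr hab
  rw [add_mul, one_div_mul_eq_div, one_div_mul_eq_div]
  rcases le_or_gt b c with hbc | hcb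
  · have := sub_le_diam_image_div_abs hbdd hm₁ hab ha hb
      (hF₁ a ha (hab.trans hbc)) (hF₁ b hb hbc)
    linarith
  rcases le_or_gt c a with hca | hac
  · have := sub_le_diam_image_div_abs hbdd hm₂ hab ha hb
      (hF₂ a ha hca) (hF₂ b hb (hca.trans hab))
    linarith
  have hc : c ∈ Icc a b := ⟨hac.le, hcb.le⟩
  have hleft := sub_le_diam_image_div_abs hbdd hm₁ hac.le ha hc
    (hF₁ a ha hac.le) (hF₁ c hc le_rfl)
  have hright := sub_le_diam_image_div_abs hbdd hm₂ hcb.le hc hb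
    (hF₂ c hc le_rfl) (hF₂ b hb hcb.le)
  linarith

end

theorem two_slope_expansion_general
    (d c e α β : ℝ) (F : ℝ → ℝ)
    (hα : 0 < α) (hβ : 0 < β)
    (hcont : ContinuousOn F (Set.Icc d e))
    (haff1 : ∃ m b₀ : ℝ, |m| = α ∧ ∀ x ∈ Set.Icc d c, F x = m * x + b₀)
    (haff2 : ∃ m b₀ : ℝ, |m| = β ∧ ∀ x ∈ Set.Icc c e, F x = m * x + b₀) :
    ∀ lam : ℝ, 1 / α + 1 / β < lam → lam < 1 →
      ∀ a b : ℝ, d ≤ a → a < b → b ≤ e →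
        b - a < lam * Metric.diam (F '' Set.Icc a b) := by
  obtain ⟨m₁, b₁, rfl, hF₁⟩ := haff1
  obtain ⟨m₂, b₂, rfl, hF₂⟩ := haff2
  intro lam hlam _ a b hda hab hbe
  have hbdd : Bornology.IsBounded (F '' Icc a b) :=
    (isCompact_Icc.image_of_continuousOn (hcont.mono (Icc_subset_Icc hda hbe))).isBounded
  have hle := sub_le_inv_add_inv_mul_diam_image hbdd hab.le
    (abs_pos.mp hα) (abs_pos.mp hβ)
    (fun x hx hxc => hF₁ x ⟨hda.trans hx.1, hxc⟩) (fun x hx hcx => hF₂ x ⟨hcx, hx.2.trans hbe⟩)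
  have hD : 0 < diam (F '' Icc a b) :=
    pos_of_mul_pos_right ((sub_pos.mpr hab).trans_le hle) (by positivity)
  calc b - a ≤ (1 / |m₁| + 1 / |m₂|) * diam (F '' Icc a b) := hle
    _ < lam * diam (F '' Icc a b) := mul_lt_mul_of_pos_right hlam hD

/-- Expansion lemma for a continuous map which is affine on `[d, c]` with slope of absolute
value `α` and affine on `[c, e]` with slope of absolute value `β`, where `1/α + 1/β < 1`:
every subsegment `[a, b] ⊆ [d, e]` satisfies `b - a < λ · |F([a, b])|` for each
`λ ∈ (1/α + 1/β, 1)`, where `|F([a, b])|` is the length (diameter) of the image segment. -/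
theorem two_slope_expansion
    (d c e α β : ℝ) (F : ℝ → ℝ)
    (hdc : d < c) (hce : c < e)
    (hα : 0 < α) (hβ : 0 < β)
    (hcont : ContinuousOn F (Set.Icc d e))
    (haff1 : ∃ m b₀ : ℝ, |m| = α ∧ ∀ x ∈ Set.Icc d c, F x = m * x + b₀)
    (haff2 : ∃ m b₀ : ℝ, |m| = β ∧ ∀ x ∈ Set.Icc c e, F x = m * x + b₀)
    (hslope : 1 / α + 1 / β < 1) :
    ∀ lam : ℝ, 1 / α + 1 / β < lam → lam < 1 →
      ∀ a b : ℝ, d ≤ a → a < b → b ≤ e →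
        b - a < lam * Metric.diam (F '' Set.Icc a b) :=
  two_slope_expansion_general d c e α β F hα hβ hcont haff1 haff2
end

section
/- Under the saw map setup, the segment J* = [0, p_{k*}] satisfies T(J*) = J*; in particular J* is invariant under T. -/
/-- `T` is affine (linear) on the segment `[a, b]`. -/
def AffOn (T : ℝ → ℝ) (a b : ℝ) : Prop :=
  ∃ m c : ℝ, ∀ x ∈ Set.Icc a b, T x = m * x + c

/-- The "saw map" setup: sequences `q, r, p`, the map `T`, fixed points `e k ∈ (q (k+1), r k)`
and `ehat k ∈ (r k, q k)`, and the index `kstar`, subject to all standing assumptions. -/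
structure SawMapSetup where
  q : ℕ → ℝ
  r : ℕ → ℝ
  p : ℕ → ℝ
  T : ℝ → ℝ
  e : ℕ → ℝ
  ehat : ℕ → ℝ
  kstar : ℕ
  hq_pos : ∀ k, 1 ≤ k → 0 < q k
  hr_pos : ∀ k, 0 < r k
  hq1r0 : q 1 < r 0
  hrq : ∀ k, 1 ≤ k → r k < q k
  hqr : ∀ k, 1 ≤ k → q (k + 1) < r k
  hq_lim : Filter.Tendsto q Filter.atTop (nhds 0)
  hr_lim : Filter.Tendsto r Filter.atTop (nhds 0)
  hp_pos : ∀ k, 0 < p k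
  hp_dec : ∀ k, p (k + 1) < p k
  hp0r0 : p 0 < r 0
  hpr : ∀ k, 1 ≤ k → r k < p k
  hT0 : T 0 = 0
  hTq : ∀ k, 1 ≤ k → T (q k) = 0
  hTr : ∀ k, T (r k) = p k
  haff0 : AffOn T (q 1) (r 0)
  haff1 : ∀ k, 1 ≤ k → AffOn T (q (k + 1)) (r k)
  haff2 : ∀ k, 1 ≤ k → AffOn T (r k) (q k)
  hTJ : Set.MapsTo T (Set.Icc 0 (r 0)) (Set.Icc 0 (r 0))
  halpha1 : ∀ k, 1 ≤ k → 1 < p k / (r k - q (k + 1))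
  he_mem : ∀ k, 1 ≤ k → e k ∈ Set.Ioo (q (k + 1)) (r k)
  he_fix : ∀ k, 1 ≤ k → T (e k) = e k
  he_uniq : ∀ k, 1 ≤ k → ∀ x ∈ Set.Ioo (q (k + 1)) (r k), T x = x → x = e k
  hehat_mem : ∀ k, 1 ≤ k → ehat k ∈ Set.Ioo (r k) (q k)
  hehat_fix : ∀ k, 1 ≤ k → T (ehat k) = ehat k
  hehat_uniq : ∀ k, 1 ≤ k → ∀ x ∈ Set.Ioo (r k) (q k), T x = x → x = ehat k
  halpha_mono : ∀ k, p k / (r k - q (k + 1)) < p (k + 1) / (r (k + 1) - q (k + 2))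
  hbeta_mono : ∀ k, 1 ≤ k → p k / (q k - r k) < p (k + 1) / (q (k + 1) - r (k + 1))
  hkstar : 1 ≤ kstar
  hp_e_big : ∀ k, kstar + 1 ≤ k → e (k - 1) < p k
  hp_e_small : 2 ≤ kstar → ∀ k, 2 ≤ k → k ≤ kstar → p k < e (k - 1)
  htech : ∀ k, 1 ≤ k → k < kstar → p k < q k + e k / (p (k - 1) / (r (k - 1) - q k))

namespace SawMapSetup

variable (S : SawMapSetup)

/-- Absolute value of the slope of `T` on `[q (k+1), r k]`. -/
noncomputable def alpha (k : ℕ) : ℝ := S.p k / (S.r k - S.q (k + 1))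

/-- Absolute value of the slope of `T` on `[r k, q k]`. -/
noncomputable def beta (k : ℕ) : ℝ := S.p k / (S.q k - S.r k)

/-- The invariant segment `J* = [0, p kstar]`. -/
def Jstar : Set ℝ := Set.Icc 0 (S.p S.kstar)

/-- The segment `J_k = [e k, p k]`. -/
def Jk (k : ℕ) : Set ℝ := Set.Icc (S.e k) (S.p k)

/-- The segment `G_k = [T (p k), p k]`. -/
def Gk (k : ℕ) : Set ℝ := Set.Icc (S.T (S.p k)) (S.p k)

/-- The set `Ω` of points of `J*` that are eventually mapped to `0`. -/
def Omega : Set ℝ := {x | x ∈ S.Jstar ∧ ∃ n, 1 ≤ n ∧ S.T^[n] x = 0}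

/-- The set `Σ`, the closure of `Ω`. -/
def Sig : Set ℝ := closure S.Omega

end SawMapSetup


/-!
Points of `J*` below `q kstar` lie on a tooth `[q (n+1), q n]` with `n ≥ kstar`, where `T` is at
most `p n ≤ p kstar`. On `[q kstar, p kstar]` the map lies below the diagonal, since it is affine
on `[q kstar, b]` with `T (q kstar) = 0` and `T b ≤ b` for some `b ≥ p kstar` (the fixed point
`e (kstar - 1)`, or `r 0` when `kstar = 1`). Conversely, the rising branch of the tooth
`[q (kstar+1), r kstar] ⊆ J*` already covers `[0, p kstar]` by the intermediate value theorem.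
-/

open Set Filter

namespace AffOn

variable {T g : ℝ → ℝ} {a b : ℝ}

theorem mono {a' b' : ℝ} (h : AffOn T a b) (ha : a ≤ a') (hb : b' ≤ b) : AffOn T a' b' := by
  obtain ⟨m, c, hmc⟩ := h
  exact ⟨m, c, fun x hx => hmc x ⟨ha.trans hx.1, hx.2.trans hb⟩⟩

theorem continuousOn (h : AffOn T a b) : ContinuousOn T (Icc a b) := by
  obtain ⟨m, c, hmc⟩ := h
  exact (continuous_const.mul continuous_id |>.add continuous_const).continuousOn.congr hmc

theorem const (c : ℝ) : AffOn (fun _ => c) a b := ⟨0, c, by simp⟩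

theorem id : AffOn (fun x => x) a b := ⟨1, 0, by simp⟩

theorem le_of_le_endpoints (hT : AffOn T a b) (hg : AffOn g a b) (ha : T a ≤ g a)
    (hb : T b ≤ g b) {x : ℝ} (hx : x ∈ Icc a b) : T x ≤ g x := by
  obtain ⟨m, c, hmc⟩ := hT
  obtain ⟨m', c', hmc'⟩ := hg
  have hab : a ≤ b := hx.1.trans hx.2
  rw [hmc a ⟨le_rfl, hab⟩, hmc' a ⟨le_rfl, hab⟩] at ha
  rw [hmc b ⟨hab, le_rfl⟩, hmc' b ⟨hab, le_rfl⟩] at hb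
  rw [hmc x hx, hmc' x hx]
  rcases le_total m m' with hm | hm
  · nlinarith [mul_nonneg (sub_nonneg.2 hm) (sub_nonneg.2 hx.1)]
  · nlinarith [mul_nonneg (sub_nonneg.2 hm) (sub_nonneg.2 hx.2)]

end AffOn

theorem exists_succ_lt_le_of_eventually_lt {u : ℕ → ℝ} {x : ℝ} (hu : ∀ᶠ n in atTop, u n < x)
    {k : ℕ} (hk : x ≤ u k) : ∃ n, k ≤ n ∧ u (n + 1) < x ∧ x ≤ u n := by
  classical
  have hex : ∃ N, u (k + N) < x := by
    obtain ⟨n, hn, hkn⟩ := (hu.and (eventually_ge_atTop k)).exists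
    exact ⟨n - k, by rwa [Nat.add_sub_cancel' hkn]⟩
  have hN : Nat.find hex ≠ 0 := fun h0 => (Nat.find_spec hex).not_ge (by simpa [h0] using hk)
  refine ⟨k + (Nat.find hex - 1), Nat.le_add_right _ _, ?_, ?_⟩
  · simpa [add_assoc, Nat.sub_add_cancel (Nat.pos_of_ne_zero hN)] using Nat.find_spec hex
  · exact not_lt.1 (Nat.find_min hex (Nat.sub_lt (Nat.pos_of_ne_zero hN) one_pos))

namespace SawMapSetup

variable (S : SawMapSetup)

theorem p_strictAnti : StrictAnti S.p := strictAnti_nat_of_succ_lt S.hp_dec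

theorem p_kstar_lt_r_zero : S.p S.kstar < S.r 0 :=
  (S.p_strictAnti.antitone (Nat.zero_le _)).trans_lt S.hp0r0

theorem T_le_p_of_mem_tooth {k : ℕ} (hk : 1 ≤ k) {x : ℝ} (hx : x ∈ Icc (S.q (k + 1)) (S.q k)) :
    S.T x ≤ S.p k := by
  have hp := (S.hp_pos k).le
  rcases le_total x (S.r k) with hxr | hxr
  · refine (S.haff1 k hk).le_of_le_endpoints (AffOn.const _) ?_ ?_ ⟨hx.1, hxr⟩
    · simpa [S.hTq (k + 1) (by omega)] using hp
    · simp [S.hTr k]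
  · refine (S.haff2 k hk).le_of_le_endpoints (AffOn.const _) ?_ ?_ ⟨hxr, hx.2⟩
    · simp [S.hTr k]
    · simpa [S.hTq k hk] using hp

theorem exists_affOn_q_kstar :
    ∃ b, S.p S.kstar ≤ b ∧ S.T b ≤ b ∧ AffOn S.T (S.q S.kstar) b := by
  obtain ⟨k, hk⟩ : ∃ k, S.kstar = k + 1 := ⟨S.kstar - 1, by have := S.hkstar; omega⟩
  rcases Nat.eq_zero_or_pos k with rfl | hk1
  · rw [hk]
    exact ⟨S.r 0, (hk ▸ S.p_kstar_lt_r_zero).le, S.hTr 0 ▸ S.hp0r0.le, S.haff0⟩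
  · have he := S.he_mem k hk1
    refine ⟨S.e k, ?_, (S.he_fix k hk1).le, ?_⟩
    · exact (S.hp_e_small (by omega) S.kstar (by omega) le_rfl).le.trans (by simp [hk])
    · rw [hk]
      exact (S.haff1 k hk1).mono le_rfl he.2.le

theorem T_le_self_of_q_kstar_le {x : ℝ} (hx : x ∈ Icc (S.q S.kstar) (S.p S.kstar)) :
    S.T x ≤ x := by
  obtain ⟨b, hpb, hTb, hT⟩ := S.exists_affOn_q_kstar
  refine hT.le_of_le_endpoints AffOn.id ?_ hTb ⟨hx.1, hx.2.trans hpb⟩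
  rw [S.hTq _ S.hkstar]
  exact (S.hq_pos _ S.hkstar).le

theorem mapsTo_Jstar : MapsTo S.T S.Jstar S.Jstar := by
  intro x ⟨hx0, hxp⟩
  refine ⟨(S.hTJ ⟨hx0, hxp.trans S.p_kstar_lt_r_zero.le⟩).1, ?_⟩
  rcases hx0.eq_or_lt with rfl | hx0
  · rw [S.hT0]
    exact (S.hp_pos _).le
  rcases le_total (S.q S.kstar) x with hqx | hxq
  · exact (S.T_le_self_of_q_kstar_le ⟨hqx, hxp⟩).trans hxp
  · obtain ⟨n, hn, hlt, hle⟩ :=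
      exists_succ_lt_le_of_eventually_lt (S.hq_lim.eventually (gt_mem_nhds hx0)) hxq
    exact (S.T_le_p_of_mem_tooth (S.hkstar.trans hn) ⟨hlt.le, hle⟩).trans
      (S.p_strictAnti.antitone hn)

theorem Jstar_subset_image : S.Jstar ⊆ S.T '' S.Jstar := by
  have hqr := S.hqr S.kstar S.hkstar
  have hIVT := intermediate_value_Icc hqr.le (S.haff1 S.kstar S.hkstar).continuousOn
  rw [S.hTq _ (by omega), S.hTr] at hIVT
  refine hIVT.trans (image_mono (Icc_subset_Icc ?_ ?_))
  · exact (S.hq_pos _ (by omega)).le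
  · exact (S.hpr S.kstar S.hkstar).le

end SawMapSetup

/-- Under the saw map setup, `T(J*) = J*`; in particular `J*` is invariant under `T`. -/
theorem Jstar_invariant (S : SawMapSetup) :
    S.T '' S.Jstar = S.Jstar ∧ Set.MapsTo S.T S.Jstar S.Jstar :=
  ⟨S.mapsTo_Jstar.image_subset.antisymm S.Jstar_subset_image, S.mapsTo_Jstar⟩
end

section
/- Under the saw map setup, the fixed point e_k belongs to Σ for every k ≥ k*. -/
/-!
On `[q (k+1), r k]` the map `T` is the expanding affine branch `x ↦ e k + α_k (x - e k)`.
Its inverse `y ↦ e k + (y - e k) / α_k` contracts `[q (k+1), e k]` into itself towards `e k`,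
so the backward orbit of `q (k+1)` under this inverse branch converges to `e k`; its points
are mapped by iterates of `T` to `q (k+1)` and then to `0`, hence lie in `Ω`.
-/

open Set Filter Topology

theorem Set.LeftInvOn.iterate {α : Type*} {f g : α → α} {s : Set α} (h : LeftInvOn g f s)
    (hf : MapsTo f s s) (n : ℕ) : LeftInvOn g^[n] f^[n] s := by
  induction n with
  | zero => exact fun _ _ => rfl
  | succ n ih =>
    intro x hx
    rw [Function.iterate_succ_apply, Function.iterate_succ_apply', h (hf.iterate n hx), ih hx]

theorem iterate_affine (e c y : ℝ) (n : ℕ) :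
    (fun z => e + (z - e) * c)^[n] y = e + (y - e) * c ^ n := by
  induction n with
  | zero => simp
  | succ n ih => rw [Function.iterate_succ_apply', ih]; ring

theorem tendsto_iterate_affine {c : ℝ} (hc : |c| < 1) (e y : ℝ) :
    Tendsto (fun n => (fun z => e + (z - e) * c)^[n] y) atTop (𝓝 e) := by
  simp only [iterate_affine]
  simpa using ((tendsto_pow_atTop_nhds_zero_of_abs_lt_one hc).const_mul (y - e)).const_add e

theorem AffOn.eq_of_mem_Icc {T : ℝ → ℝ} {a b : ℝ} (hT : AffOn T a b) (hab : a < b) {x : ℝ}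
    (hx : x ∈ Icc a b) : T x = T a + (T b - T a) / (b - a) * (x - a) := by
  obtain ⟨m, c, h⟩ := hT
  rw [h x hx, h a ⟨le_rfl, hab.le⟩, h b ⟨hab.le, le_rfl⟩]
  field_simp [(sub_pos.2 hab).ne']
  ring

theorem mem_closure_iterate_eq_of_affine {T : ℝ → ℝ} {a e α : ℝ} (hα : 1 < α)
    (hae : a ≤ e) (hT : ∀ x ∈ Icc a e, T x = e + α * (x - e)) :
    e ∈ closure {x ∈ Icc a e | ∃ n, T^[n] x = a} := by
  have hα₀ : 0 < α := one_pos.trans hα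
  set g : ℝ → ℝ := fun y => e + (y - e) * α⁻¹
  have hg : MapsTo g (Icc a e) (Icc a e) := by
    intro y ⟨hay, hye⟩
    have hle : (y - e) * α⁻¹ ≤ 0 :=
      mul_nonpos_of_nonpos_of_nonneg (by linarith) (by positivity)
    have hge : y - e ≤ (y - e) * α⁻¹ := by
      rw [← div_eq_mul_inv, le_div_iff₀ hα₀]; nlinarith
    constructor <;> simp only [g] <;> linarith
  have hTg : LeftInvOn T g (Icc a e) := fun y hy => by
    rw [hT _ (hg hy)]
    simp only [g]
    field_simp
    ring
  have hcontr : |α⁻¹| < 1 := by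
    rw [abs_inv, abs_of_pos hα₀]; exact inv_lt_one_of_one_lt₀ hα
  refine mem_closure_of_tendsto (tendsto_iterate_affine hcontr e a)
    (Eventually.of_forall fun n => ?_)
  have ha : a ∈ Icc a e := ⟨le_rfl, hae⟩
  exact ⟨hg.iterate n ha, n, hTg.iterate hg n ha⟩

namespace SawMapSetup

variable (S : SawMapSetup)

theorem one_lt_alpha {k : ℕ} (hk : 1 ≤ k) : 1 < S.alpha k := S.halpha1 k hk

theorem T_eq_alpha_mul {k : ℕ} (hk : 1 ≤ k) {x : ℝ} (hx : x ∈ Icc (S.q (k + 1)) (S.r k)) :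
    S.T x = S.alpha k * (x - S.q (k + 1)) := by
  rw [(S.haff1 k hk).eq_of_mem_Icc (S.hqr k hk) hx, S.hTq (k + 1) (by omega), S.hTr k, alpha]
  ring

theorem T_eq_e_add_alpha_mul {k : ℕ} (hk : 1 ≤ k) {x : ℝ}
    (hx : x ∈ Icc (S.q (k + 1)) (S.r k)) : S.T x = S.e k + S.alpha k * (x - S.e k) := by
  have he := S.he_mem k hk
  have hfix : S.alpha k * (S.e k - S.q (k + 1)) = S.e k := by
    rw [← S.T_eq_alpha_mul hk ⟨he.1.le, he.2.le⟩, S.he_fix k hk]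
  rw [S.T_eq_alpha_mul hk hx]
  linear_combination hfix

theorem Icc_q_e_subset_Jstar {k : ℕ} (hk : S.kstar ≤ k) :
    Icc (S.q (k + 1)) (S.e k) ⊆ S.Jstar := by
  have hk1 : 1 ≤ k := S.hkstar.trans hk
  have hp : S.p k ≤ S.p S.kstar := (strictAnti_nat_of_succ_lt S.hp_dec).antitone hk
  have := S.hq_pos (k + 1) (by omega)
  have := (S.he_mem k hk1).2
  have := S.hpr k hk1
  exact Icc_subset_Icc (by linarith) (by linarith)

end SawMapSetup

/-- Under the saw map setup, the fixed point `e k` belongs to `Σ` for every `k ≥ kstar`. -/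
theorem e_mem_Sig (S : SawMapSetup) :
    ∀ k, S.kstar ≤ k → S.e k ∈ S.Sig := by
  intro k hk
  have hk1 : 1 ≤ k := S.hkstar.trans hk
  have he := S.he_mem k hk1
  refine closure_mono ?_ (mem_closure_iterate_eq_of_affine (S.one_lt_alpha hk1) he.1.le
    fun x hx => S.T_eq_e_add_alpha_mul hk1 ⟨hx.1, hx.2.trans he.2.le⟩)
  rintro x ⟨hx, n, hn⟩
  refine ⟨S.Icc_q_e_subset_Jstar hk hx, n + 1, n.succ_pos, ?_⟩
  rw [Function.iterate_succ_apply', hn, S.hTq (k + 1) (by omega)]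
end

section
/- Under the skew tent map setup, let f := min{x > e : T(x) = e}. If 1/α + 1/β ≥ 1, then f ≥ p and the segment [e, p] is invariant, i.e., T([e, p]) ⊆ [e, p]. If 1/α + 1/β < 1, then f < p and [e, p] is not invariant; in fact T(p) < e. -/
/-!
On `(e, ∞)` the map `T` hits `e` only once, at `f = r + (p - e) / β` on the decreasing branch,
and `[e, p]` is invariant exactly when `T p ≥ e`. Both `f - p` and `T p - e` are positive
multiples of `1/α + 1/β - 1`, which decides both questions at once.
-/

namespace SkewTent

variable {e r α β p : ℝ} {T : ℝ → ℝ}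

/-- The point of the decreasing branch `x ↦ p - β * (x - r)` that is mapped to `e`. -/
noncomputable def rightPreimage (e r β p : ℝ) : ℝ := r + (p - e) / β

lemma apex_eq (hT1 : ∀ x ≤ r, T x = e + α * (x - e)) (hT2 : ∀ x ≥ r, T x = p - β * (x - r)) :
    p = e + α * (r - e) := by
  simpa using (hT2 r le_rfl).symm.trans (hT1 r le_rfl)

lemma setOf_lt_and_apply_eq_eq (her : e < r) (hα : 0 < α) (hβ : 0 < β)
    (hT1 : ∀ x ≤ r, T x = e + α * (x - e)) (hT2 : ∀ x ≥ r, T x = p - β * (x - r)) :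
    {x | e < x ∧ T x = e} = {rightPreimage e r β p} := by
  have hep : 0 < p - e := by rw [apex_eq hT1 hT2]; nlinarith
  have hrf : r < rightPreimage e r β p := lt_add_of_pos_right r (div_pos hep hβ)
  ext x
  simp only [Set.mem_ofPred_eq, Set.mem_singleton_iff]
  constructor
  · rintro ⟨hex, hTx⟩
    rcases le_or_gt x r with hxr | hrx
    · rw [hT1 x hxr] at hTx
      nlinarith
    · rw [hT2 x hrx.le] at hTx
      rw [rightPreimage]
      field_simp
      linarith
  · rintro rfl
    refine ⟨her.trans hrf, ?_⟩
    rw [hT2 _ hrf.le, rightPreimage]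
    field_simp
    ring

lemma rightPreimage_sub_apex (hα : α ≠ 0) (hβ : β ≠ 0) (hp : p = e + α * (r - e)) :
    rightPreimage e r β p - p = α * (r - e) * (1 / α + 1 / β - 1) := by
  subst hp
  unfold rightPreimage
  field_simp
  ring

lemma apply_apex_sub (hα : α ≠ 0) (hβ : β ≠ 0) (hrp : r ≤ p) (hp : p = e + α * (r - e))
    (hT2 : ∀ x ≥ r, T x = p - β * (x - r)) :
    T p - e = α * β * (r - e) * (1 / α + 1 / β - 1) := by
  rw [hT2 p hrp]
  subst hp
  field_simp
  ring

/-- `T` is increasing on `[e, r]` from `e` to `p` and decreasing on `[r, p]` from `p` to `T p`. -/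
lemma mapsTo_Icc_iff (her : e ≤ r) (hα : 0 ≤ α) (hβ : 0 ≤ β)
    (hT1 : ∀ x ≤ r, T x = e + α * (x - e)) (hT2 : ∀ x ≥ r, T x = p - β * (x - r)) :
    Set.MapsTo T (Set.Icc e p) (Set.Icc e p) ↔ e ≤ T p := by
  have hp := apex_eq hT1 hT2
  refine ⟨fun h => (h ⟨by nlinarith, le_rfl⟩).1, fun hTp x ⟨hex, hxp⟩ => ?_⟩
  rcases le_total x r with hxr | hrx
  · rw [hT1 x hxr]
    constructor <;> nlinarith
  · have hrp : r ≤ p := hrx.trans hxp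
    rw [hT2 x hrx]
    rw [hT2 p hrp] at hTp
    constructor <;> nlinarith

end SkewTent

open SkewTent

theorem skew_tent_invariance_criterion_general
    (e r α β p : ℝ) (T : ℝ → ℝ)
    (her : e < r) (hα : 1 < α) (hβ : 0 < β)
    (hT1 : ∀ x ≤ r, T x = e + α * (x - e))
    (hT2 : ∀ x ≥ r, T x = p - β * (x - r)) :
    (1 ≤ 1 / α + 1 / β →
      p ≤ sInf {x : ℝ | e < x ∧ T x = e} ∧
      Set.MapsTo T (Set.Icc e p) (Set.Icc e p)) ∧
    (1 / α + 1 / β < 1 →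
      sInf {x : ℝ | e < x ∧ T x = e} < p ∧
      ¬ Set.MapsTo T (Set.Icc e p) (Set.Icc e p) ∧
      T p < e) := by
  have hα0 : 0 < α := one_pos.trans hα
  have hp := apex_eq hT1 hT2
  have hrp : r ≤ p := by nlinarith
  have hf := rightPreimage_sub_apex hα0.ne' hβ.ne' hp
  have hTp := apply_apex_sub hα0.ne' hβ.ne' hrp hp hT2
  have hre : 0 < r - e := sub_pos.2 her
  rw [setOf_lt_and_apply_eq_eq her hα0 hβ hT1 hT2, csInf_singleton,
    mapsTo_Icc_iff her.le hα0.le hβ.le hT1 hT2]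
  constructor
  · intro h
    have hc : 0 ≤ 1 / α + 1 / β - 1 := sub_nonneg.2 h
    constructor
    · nlinarith [mul_nonneg (mul_pos hα0 hre).le hc]
    · nlinarith [mul_nonneg (mul_pos (mul_pos hα0 hβ) hre).le hc]
  · intro h
    have hc : 1 / α + 1 / β - 1 < 0 := sub_neg.2 h
    have hTpe : T p < e := by nlinarith [mul_neg_of_pos_of_neg (mul_pos (mul_pos hα0 hβ) hre) hc]
    exact ⟨by nlinarith [mul_neg_of_pos_of_neg (mul_pos hα0 hre) hc], hTpe.not_ge, hTpe⟩

/-- Skew tent map: invariance of `[e, p]` is equivalent to `1/α + 1/β ≥ 1`, in terms of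
`f = min {x > e : T x = e}`. -/
theorem skew_tent_invariance_criterion
    (e r α β p : ℝ) (T : ℝ → ℝ)
    (her : e < r) (hα : 1 < α) (hβ : 0 < β)
    (hp : p = e + α * (r - e))
    (hT1 : ∀ x ≤ r, T x = e + α * (x - e))
    (hT2 : ∀ x ≥ r, T x = p - β * (x - r)) :
    (1 ≤ 1 / α + 1 / β →
      p ≤ sInf {x : ℝ | e < x ∧ T x = e} ∧
      Set.MapsTo T (Set.Icc e p) (Set.Icc e p)) ∧
    (1 / α + 1 / β < 1 →
      sInf {x : ℝ | e < x ∧ T x = e} < p ∧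
      ¬ Set.MapsTo T (Set.Icc e p) (Set.Icc e p) ∧
      T p < e) :=
  skew_tent_invariance_criterion_general e r α β p T her hα hβ hT1 hT2
end

section
/- Under the skew tent map setup, assume β < 1. Then T([e, p]) ⊆ [e, p], and for every x ∈ (e, p] the iterates Tⁿ(x) converge to the fixed point ê as n → ∞; i.e., [e, p] \ {e} belongs to the basin of attraction of the stable fixed point ê. -/
/-!
On `[e, r]` the map is the expansion `x ↦ e + α (x - e)` away from the repelling fixed point `e`,
so every orbit starting in `(e, p]` reaches `[r, p]` after finitely many steps. That interval is
invariant, and there `T x - ê = -β (x - ê)`, so with `β < 1` the orbit converges geometrically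
to `ê`.
-/

open Set Filter Topology

theorem Function.tendsto_iterate_of_tendsto_iterate_iterate {X : Type*} {f : X → X} {x : X}
    {l : Filter X} (N : ℕ) (h : Tendsto (fun n => f^[n] (f^[N] x)) atTop l) :
    Tendsto (fun n => f^[n] x) atTop l := by
  refine (tendsto_add_atTop_iff_nat N).mp ?_
  simpa only [Function.iterate_add_apply] using h

theorem dist_iterate_le_pow_mul {X : Type*} [PseudoMetricSpace X] {f : X → X} {s : Set X}
    {a : X} {c : ℝ} (hs : MapsTo f s s) (hc : 0 ≤ c)
    (hf : ∀ y ∈ s, dist (f y) a ≤ c * dist y a) {x : X} (hx : x ∈ s) (n : ℕ) :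
    dist (f^[n] x) a ≤ c ^ n * dist x a := by
  induction n with
  | zero => simp
  | succ n ih =>
    calc dist (f^[n + 1] x) a = dist (f (f^[n] x)) a := by rw [Function.iterate_succ_apply']
      _ ≤ c * dist (f^[n] x) a := hf _ (hs.iterate n hx)
      _ ≤ c * (c ^ n * dist x a) := mul_le_mul_of_nonneg_left ih hc
      _ = c ^ (n + 1) * dist x a := by ring

theorem tendsto_iterate_of_dist_le_mul {X : Type*} [PseudoMetricSpace X] {f : X → X}
    {s : Set X} {a : X} {c : ℝ} (hs : MapsTo f s s) (hc0 : 0 ≤ c) (hc1 : c < 1)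
    (hf : ∀ y ∈ s, dist (f y) a ≤ c * dist y a) {x : X} (hx : x ∈ s) :
    Tendsto (fun n => f^[n] x) atTop (𝓝 a) := by
  have hpow : Tendsto (fun n : ℕ => c ^ n * dist x a) atTop (𝓝 0) := by
    simpa using (tendsto_pow_atTop_nhds_zero_of_lt_one hc0 hc1).mul_const (dist x a)
  exact tendsto_iff_dist_tendsto_zero.mpr <|
    squeeze_zero (fun _ => dist_nonneg) (dist_iterate_le_pow_mul hs hc0 hf hx) hpow

theorem exists_le_iterate_of_expanding {f : ℝ → ℝ} {e r α x : ℝ} (hα : 1 < α) (hx : e < x)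
    (hf : ∀ y ≤ r, f y = e + α * (y - e)) : ∃ n, r ≤ f^[n] x := by
  by_contra! hlt
  have horbit : ∀ n, f^[n] x - e = α ^ n * (x - e) := by
    intro n
    induction n with
    | zero => simp
    | succ n ih =>
      rw [Function.iterate_succ_apply', hf _ (hlt n).le, pow_succ]
      linear_combination α * ih
  obtain ⟨n, hn⟩ := pow_unbounded_of_one_lt ((r - e) / (x - e)) hα
  have hn' : r - e < α ^ n * (x - e) := (div_lt_iff₀ (sub_pos.mpr hx)).mp hn
  linarith [hlt n, horbit n]

section SkewTent

variable {e r α β p ehat : ℝ} {T : ℝ → ℝ}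

theorem skewTent_mapsTo_Icc (her : e ≤ r) (hα : 0 ≤ α) (hβ : 0 ≤ β) (hβ1 : β ≤ 1)
    (hp : p = e + α * (r - e)) (hT1 : ∀ x ≤ r, T x = e + α * (x - e))
    (hT2 : ∀ x ≥ r, T x = p - β * (x - r)) :
    MapsTo T (Icc e p) (Icc e p) := by
  rintro x ⟨hex, hxp⟩
  rcases le_total x r with hxr | hrx
  · rw [hT1 x hxr]
    constructor <;> nlinarith
  · rw [hT2 x hrx]
    constructor <;> nlinarith

theorem skewTent_mapsTo_Icc_right (hβ : 0 ≤ β) (hβ1 : β ≤ 1)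
    (hT2 : ∀ x ≥ r, T x = p - β * (x - r)) :
    MapsTo T (Icc r p) (Icc r p) := by
  rintro x ⟨hrx, hxp⟩
  rw [hT2 x hrx]
  constructor <;> nlinarith

theorem skewTent_dist_fixedPoint (hβ : 0 ≤ β) (hehat : ehat = (p + β * r) / (1 + β))
    (hT2 : ∀ x ≥ r, T x = p - β * (x - r)) {x : ℝ} (hx : r ≤ x) :
    dist (T x) ehat = β * dist x ehat := by
  have hfix : ehat * (1 + β) = p + β * r := by
    rw [hehat]; field_simp
  have hsub : T x - ehat = -β * (x - ehat) := by
    rw [hT2 x hx]; linear_combination -hfix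
  rw [Real.dist_eq, Real.dist_eq, hsub, abs_mul, abs_neg, abs_of_nonneg hβ]

end SkewTent

/-- Skew tent map with `β < 1`: `[e, p]` is invariant and `[e, p] \ {e}` lies in the basin
of attraction of the stable fixed point `ê = (p + βr)/(1 + β)`. -/
theorem skew_tent_attracting_fixed_point
    (e r α β p ehat : ℝ) (T : ℝ → ℝ)
    (her : e < r) (hα : 1 < α) (hβ : 0 < β) (hβ1 : β < 1)
    (hp : p = e + α * (r - e))
    (hehat : ehat = (p + β * r) / (1 + β))
    (hT1 : ∀ x ≤ r, T x = e + α * (x - e))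
    (hT2 : ∀ x ≥ r, T x = p - β * (x - r)) :
    Set.MapsTo T (Set.Icc e p) (Set.Icc e p) ∧
    ∀ x ∈ Set.Ioc e p,
      Filter.Tendsto (fun n => T^[n] x) Filter.atTop (nhds ehat) := by
  have hmaps := skewTent_mapsTo_Icc her.le (by linarith) hβ.le hβ1.le hp hT1 hT2
  refine ⟨hmaps, fun x hx => ?_⟩
  obtain ⟨N, hN⟩ := exists_le_iterate_of_expanding hα hx.1 hT1
  have hNmem : T^[N] x ∈ Icc r p := ⟨hN, (hmaps.iterate N (Ioc_subset_Icc_self hx)).2⟩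
  refine Function.tendsto_iterate_of_tendsto_iterate_iterate N ?_
  exact tendsto_iterate_of_dist_le_mul (skewTent_mapsTo_Icc_right hβ.le hβ1.le hT2) hβ.le hβ1
    (fun y hy => (skewTent_dist_fixedPoint hβ.le hehat hT2 hy.1).le) hNmem
end

section
/- Under the skew tent map setup, assume β > 1 and 1/α + 1/β ≥ 1. Then T([e, p]) ⊆ [e, p]; the segment G := [T(p), p] satisfies T(G) ⊆ G; and for every y ∈ (e, p] there exists n₁ ∈ ℕ such that Tⁿ(y) ∈ G for all n ≥ n₁. -/
/-!
On `[e, r]` the map is the expansion `x ↦ e + α (x - e)` about the repelling fixed point `e`,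
so a trajectory starting in `(e, p]` cannot stay in `[e, r]` forever: `α > 1` makes
`α ^ n (y - e)` unbounded. Once it enters `(r, p]` it lies in `G = [T p, p]`, because
`β ≥ 1` gives `T p ≤ r`; and `G` is invariant because the left branch moves points to the
right while the right branch maps `[r, p]` onto `[T p, p]`. The condition `1/α + 1/β ≥ 1`,
i.e. `α β ≤ α + β`, is exactly `e ≤ T p`, which keeps everything inside `[e, p]`.
-/

namespace SkewTent

variable {e r α β p c y : ℝ} {T : ℝ → ℝ}

lemma mul_le_add_of_one_le_inv_add_inv (hα : 0 < α) (hβ : 0 < β) (h : 1 ≤ 1 / α + 1 / β) :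
    α * β ≤ α + β := by
  rw [div_add_div _ _ hα.ne' hβ.ne', le_div_iff₀ (by positivity)] at h
  linarith

lemma le_peak (her : e ≤ r) (hα : 1 ≤ α) (hp : p = e + α * (r - e)) : r ≤ p := by
  nlinarith

lemma apply_peak_le_of_one_le (hrp : r ≤ p) (hβ : 1 ≤ β)
    (hT2 : ∀ x ≥ r, T x = p - β * (x - r)) : T p ≤ r := by
  rw [hT2 p hrp]; nlinarith

lemma le_apply_peak (her : e ≤ r) (hα : 1 ≤ α) (hαβ : α * β ≤ α + β)
    (hp : p = e + α * (r - e)) (hT2 : ∀ x ≥ r, T x = p - β * (x - r)) : e ≤ T p := by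
  rw [hT2 p (le_peak her hα hp), hp]; nlinarith

lemma mapsTo_Icc (hα : 1 ≤ α) (hβ : 0 ≤ β) (hp : p = e + α * (r - e))
    (hT1 : ∀ x ≤ r, T x = e + α * (x - e)) (hT2 : ∀ x ≥ r, T x = p - β * (x - r))
    (hec : e ≤ c) (hcT : c ≤ T p) : Set.MapsTo T (Set.Icc c p) (Set.Icc c p) := by
  rintro x ⟨hcx, hxp⟩
  rcases le_total x r with hxr | hrx
  · rw [hT1 x hxr]
    constructor <;> nlinarith
  · have hTpx : T p ≤ T x := by rw [hT2 x hrx, hT2 p (hrx.trans hxp)]; nlinarith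
    rw [hT2 x hrx] at hTpx ⊢
    constructor <;> nlinarith

lemma iterate_sub_eq_pow_mul (hT1 : ∀ x ≤ r, T x = e + α * (x - e)) :
    ∀ n : ℕ, (∀ k < n, T^[k] y ≤ r) → T^[n] y - e = α ^ n * (y - e)
  | 0, _ => by simp
  | n + 1, h => by
    rw [Function.iterate_succ_apply', hT1 _ (h n n.lt_succ_self), add_sub_cancel_left,
      iterate_sub_eq_pow_mul hT1 n fun k hk => h k (hk.trans n.lt_succ_self)]
    ring

lemma exists_iterate_gt (hα : 1 < α) (hT1 : ∀ x ≤ r, T x = e + α * (x - e)) (hy : e < y) :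
    ∃ n, r < T^[n] y := by
  by_contra! hle
  obtain ⟨n, hn⟩ := pow_unbounded_of_one_lt ((r - e) / (y - e)) hα
  rw [div_lt_iff₀ (sub_pos.mpr hy)] at hn
  have := iterate_sub_eq_pow_mul hT1 n fun k _ => hle k
  linarith [hle n]

end SkewTent

open SkewTent in
/-- Skew tent map with `β > 1` and `1/α + 1/β ≥ 1`: `[e, p]` is invariant, the segment
`G = [T p, p]` is invariant, and every trajectory starting in `(e, p]` eventually stays
in `G`. -/
theorem skew_tent_absorbing_interval
    (e r α β p : ℝ) (T : ℝ → ℝ)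
    (her : e < r) (hα : 1 < α) (hβ : 1 < β)
    (hslope : 1 ≤ 1 / α + 1 / β)
    (hp : p = e + α * (r - e))
    (hT1 : ∀ x ≤ r, T x = e + α * (x - e))
    (hT2 : ∀ x ≥ r, T x = p - β * (x - r)) :
    Set.MapsTo T (Set.Icc e p) (Set.Icc e p) ∧
    Set.MapsTo T (Set.Icc (T p) p) (Set.Icc (T p) p) ∧
    ∀ y ∈ Set.Ioc e p, ∃ n₁ : ℕ, ∀ n, n₁ ≤ n → T^[n] y ∈ Set.Icc (T p) p := by
  have hαβ := mul_le_add_of_one_le_inv_add_inv (by linarith) (by linarith) hslope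
  have heT := le_apply_peak her.le hα.le hαβ hp hT2
  have hTr := apply_peak_le_of_one_le (le_peak her.le hα.le hp) hβ.le hT2
  have hI := mapsTo_Icc hα.le (by linarith) hp hT1 hT2 le_rfl heT
  have hG := mapsTo_Icc hα.le (by linarith) hp hT1 hT2 heT le_rfl
  refine ⟨hI, hG, fun y hy => ?_⟩
  obtain ⟨m, hm⟩ := exists_iterate_gt hα hT1 hy.1
  have hmG : T^[m] y ∈ Set.Icc (T p) p :=
    ⟨hTr.trans hm.le, (hI.iterate m ⟨hy.1.le, hy.2⟩).2⟩
  refine ⟨m, fun n hmn => ?_⟩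
  obtain ⟨k, rfl⟩ := Nat.exists_eq_add_of_le hmn
  rw [add_comm, Function.iterate_add_apply]
  exact hG.iterate k hmG
end

section
/- Under the skew tent map setup, assume β > 1, 1/α + 1/β > 1 and (1/β)·(1/α + 1/β) < 1. Then for every closed interval Δ ⊆ G := [T(p), p] with nonempty interior there exists m ∈ ℕ such that T^m(Δ) = G; consequently, G is a chaotic invariant set for T. -/
/-- `A` is a chaotic invariant set for `T`: `A` is closed and invariant, periodic points of
`T` are dense in `A`, `T` has sensitive dependence on initial conditions on `A`, and some
point of `A` has a dense forward orbit in `A`. -/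
def IsChaoticInvariantSet (T : ℝ → ℝ) (A : Set ℝ) : Prop :=
  IsClosed A ∧ Set.MapsTo T A A ∧
    (∀ x ∈ A, ∀ ε > 0, ∃ y ∈ A, |x - y| < ε ∧ ∃ n, 1 ≤ n ∧ T^[n] y = y) ∧
    (∃ b > 0, ∀ x ∈ A, ∀ ε > 0, ∃ y ∈ A, |x - y| < ε ∧ ∃ k : ℕ, b < |T^[k] x - T^[k] y|) ∧
    (∃ z ∈ A, ∀ x ∈ A, ∀ ε > 0, ∃ n : ℕ, |T^[n] z - x| < ε)

/-!
Write `G = [T²r, Tr]`, `σ = 1/α + 1/β` and `μ = min α (β/σ)`; `σ > 1` puts the fixed point `e`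
below `T²r`, which makes `G` invariant, and `σ < β` gives `μ > 1`. A subinterval `Δ ⊆ G` on one
side of the turning point `r` is stretched by `α` or `β`. If `Δ` straddles `r`, then
`T Δ = [m, Tr]` with `|Δ| ≤ σ (Tr - m)`; either `m ≤ r` and `T² Δ = G`, or `m > r` and
`T² Δ = [T²r, Tm]` has length `β (Tr - m) ≥ μ |Δ|`. As lengths in `G` are bounded, some iterate
maps `Δ` onto `G`. Chaos follows from this property alone: periodic points from the intermediate
value theorem applied to `T^m` on `Δ ⊆ T^m Δ`, sensitivity because small intervals reach both
endpoints of `G`, and a dense orbit from the Baire category theorem.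
-/

open Set Function

def LocallyEventuallyOnto (T : ℝ → ℝ) (c d : ℝ) : Prop :=
  ∀ a b, c ≤ a → a < b → b ≤ d → ∃ m : ℕ, T^[m] '' Icc a b = Icc c d

section

variable {T : ℝ → ℝ} {c d : ℝ}

theorem exists_Icc_subset_Icc_near {x ε : ℝ} (hcd : c < d) (hx : x ∈ Icc c d) (hε : 0 < ε) :
    ∃ a b, c ≤ a ∧ a < b ∧ b ≤ d ∧ ∀ y ∈ Icc a b, |x - y| < ε := by
  refine ⟨max c (x - ε / 2), min d (x + ε / 2), le_max_left _ _, ?_, min_le_left _ _, ?_⟩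
  · exact max_lt (lt_min hcd (by linarith [hx.1])) (lt_min (by linarith [hx.2]) (by linarith))
  · intro y hy
    rw [abs_sub_lt_iff]
    constructor <;>
      linarith [hy.1, hy.2, le_max_right c (x - ε / 2), min_le_right d (x + ε / 2)]

theorem locallyEventuallyOnto_of_expanding {μ : ℝ} (hμ : 1 < μ)
    (h : ∀ a b, c ≤ a → a < b → b ≤ d → (∃ m : ℕ, T^[m] '' Icc a b = Icc c d) ∨
      ∃ (k : ℕ) (a' b' : ℝ), c ≤ a' ∧ b' ≤ d ∧ μ * (b - a) ≤ b' - a' ∧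
        T^[k] '' Icc a b = Icc a' b') :
    LocallyEventuallyOnto T c d := by
  suffices key : ∀ n : ℕ, ∀ a b, c ≤ a → a < b → b ≤ d → d - c < μ ^ n * (b - a) →
      ∃ m : ℕ, T^[m] '' Icc a b = Icc c d by
    intro a b hca hab hbd
    obtain ⟨n, hn⟩ := pow_unbounded_of_one_lt ((d - c) / (b - a)) hμ
    exact key n a b hca hab hbd (by rwa [div_lt_iff₀ (sub_pos.2 hab)] at hn)
  intro n
  induction n with
  | zero =>
    intro a b hca _ hbd hlen
    rw [pow_zero, one_mul] at hlen
    linarith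
  | succ n ih =>
    intro a b hca hab hbd hlen
    obtain hm | ⟨k, a', b', hca', hbd', hexp, hk⟩ := h a b hca hab hbd
    · exact hm
    have hlen' : d - c < μ ^ n * (b' - a') := calc
      d - c < μ ^ (n + 1) * (b - a) := hlen
      _ = μ ^ n * (μ * (b - a)) := by ring
      _ ≤ μ ^ n * (b' - a') := by gcongr
    have hab' : a' < b' :=
      sub_pos.1 (pos_of_mul_pos_right (by linarith) (by positivity : (0 : ℝ) ≤ μ ^ n))
    obtain ⟨m, hm⟩ := ih a' b' hca' hab' hbd' hlen'
    exact ⟨m + k, by rw [iterate_add, image_comp, hk, hm]⟩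

namespace LocallyEventuallyOnto

theorem exists_pos_iterate (h : LocallyEventuallyOnto T c d) (hG : T '' Icc c d = Icc c d)
    {a b : ℝ} (hca : c ≤ a) (hab : a < b) (hbd : b ≤ d) :
    ∃ m : ℕ, 1 ≤ m ∧ T^[m] '' Icc a b = Icc c d := by
  obtain ⟨m, hm⟩ := h a b hca hab hbd
  exact ⟨m + 1, le_add_self, by rw [iterate_succ', image_comp, hm, hG]⟩

theorem exists_periodicPt_near (h : LocallyEventuallyOnto T c d) (hT : Continuous T)
    (hcd : c < d) (hG : T '' Icc c d = Icc c d) :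
    ∀ x ∈ Icc c d, ∀ ε > 0, ∃ y ∈ Icc c d, |x - y| < ε ∧ ∃ n, 1 ≤ n ∧ T^[n] y = y := by
  intro x hx ε hε
  obtain ⟨a, b, hca, hab, hbd, hnear⟩ := exists_Icc_subset_Icc_near hcd hx hε
  obtain ⟨m, hm, hmG⟩ := h.exists_pos_iterate hG hca hab hbd
  have hsub : Icc a b ⊆ Icc c d := Icc_subset_Icc hca hbd
  obtain ⟨y, hy, hfix⟩ := exists_mem_Icc_isFixedPt_of_surjOn (hT.iterate m).continuousOn hab.le
    (by rw [SurjOn, hmG]; exact hsub)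
  exact ⟨y, hsub hy, hnear y hy, m, hm, hfix⟩

theorem sensitive (h : LocallyEventuallyOnto T c d) (hcd : c < d) :
    ∃ δ > 0, ∀ x ∈ Icc c d, ∀ ε > 0, ∃ y ∈ Icc c d, |x - y| < ε ∧
      ∃ k : ℕ, δ < |T^[k] x - T^[k] y| := by
  refine ⟨(d - c) / 3, by linarith, fun x hx ε hε => ?_⟩
  obtain ⟨a, b, hca, hab, hbd, hnear⟩ := exists_Icc_subset_Icc_near hcd hx hε
  obtain ⟨m, hm⟩ := h a b hca hab hbd
  have hfar : ∃ z ∈ Icc c d, (d - c) / 3 < |T^[m] x - z| := by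
    rcases le_or_gt (T^[m] x) ((c + d) / 2) with hle | hgt
    · exact ⟨d, right_mem_Icc.2 hcd.le, by rw [abs_sub_comm, abs_of_pos (by linarith)]; linarith⟩
    · exact ⟨c, left_mem_Icc.2 hcd.le, by rw [abs_of_pos (by linarith)]; linarith⟩
  obtain ⟨z, hz, hxz⟩ := hfar
  obtain ⟨y, hy, rfl⟩ : z ∈ T^[m] '' Icc a b := hm ▸ hz
  exact ⟨y, Icc_subset_Icc hca hbd hy, hnear y hy, m, hxz⟩

theorem exists_dense_orbit (h : LocallyEventuallyOnto T c d) (hT : Continuous T) (hcd : c < d) :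
    ∃ z ∈ Icc c d, ∀ x ∈ Icc c d, ∀ ε > 0, ∃ n : ℕ, |T^[n] z - x| < ε := by
  let ι := {q : ℚ × ℚ // (Ioo (q.1 : ℝ) q.2 ∩ Icc c d).Nonempty}
  -- with the complement of `Icc c d` added, `W q` is dense in all of `ℝ`, where Baire applies
  let W : ι → Set ℝ := fun q => (Icc c d)ᶜ ∪ ⋃ n : ℕ, T^[n] ⁻¹' Ioo (q.1.1 : ℝ) q.1.2
  have hW_open : ∀ q, IsOpen (W q) := fun q =>
    isClosed_Icc.isOpen_compl.union (isOpen_iUnion fun n => isOpen_Ioo.preimage (hT.iterate n))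
  have hW_dense : ∀ q, Dense (W q) := by
    intro q
    refine dense_iff_inter_open.2 fun U hU ⟨x, hxU⟩ => ?_
    by_cases hUG : U ⊆ Icc c d
    · obtain ⟨δ, hδ, hball⟩ := Metric.isOpen_iff.1 hU x hxU
      obtain ⟨a, b, hca, hab, hbd, hnear⟩ := exists_Icc_subset_Icc_near hcd (hUG hxU) hδ
      obtain ⟨m, hm⟩ := h a b hca hab hbd
      obtain ⟨w, hwq, hwG⟩ := q.2
      obtain ⟨y, hy, hyw⟩ : w ∈ T^[m] '' Icc a b := hm ▸ hwG
      refine ⟨y, hball ?_, Or.inr (mem_iUnion.2 ⟨m, by rw [mem_preimage, hyw]; exact hwq⟩)⟩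
      rw [Metric.mem_ball, Real.dist_eq, abs_sub_comm]
      exact hnear y hy
    · obtain ⟨y, hyU, hyG⟩ := not_subset.1 hUG
      exact ⟨y, hyU, Or.inl hyG⟩
  obtain ⟨z, hzG, hzW⟩ := (dense_iInter_of_isOpen hW_open hW_dense).inter_open_nonempty
    (Ioo c d) isOpen_Ioo (nonempty_Ioo.2 hcd)
  refine ⟨z, Ioo_subset_Icc_self hzG, fun x hx ε hε => ?_⟩
  obtain ⟨q₁, hq₁⟩ := exists_rat_btwn (show x - ε < x by linarith)
  obtain ⟨q₂, hq₂⟩ := exists_rat_btwn (show x < x + ε by linarith)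
  obtain hzG' | hz := mem_iInter.1 hzW ⟨(q₁, q₂), x, ⟨hq₁.2, hq₂.1⟩, hx⟩
  · exact absurd (Ioo_subset_Icc_self hzG) hzG'
  obtain ⟨n, hn⟩ := mem_iUnion.1 hz
  exact ⟨n, abs_sub_lt_iff.2 ⟨by linarith [hn.2, hq₂.2], by linarith [hn.1, hq₁.1]⟩⟩

theorem isChaoticInvariantSet (h : LocallyEventuallyOnto T c d) (hT : Continuous T)
    (hcd : c < d) (hG : T '' Icc c d = Icc c d) : IsChaoticInvariantSet T (Icc c d) :=
  ⟨isClosed_Icc, (mapsTo_image T _).mono_right hG.subset, h.exists_periodicPt_near hT hcd hG,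
    h.sensitive hcd, h.exists_dense_orbit hT hcd⟩

end LocallyEventuallyOnto

end

structure IsSkewTent (T : ℝ → ℝ) (e r α β : ℝ) : Prop where
  eq_of_le : ∀ x ≤ r, T x = e + α * (x - e)
  eq_of_ge : ∀ x ≥ r, T x = T r - β * (x - r)

namespace IsSkewTent

variable {T : ℝ → ℝ} {e r α β : ℝ}

theorem continuous (h : IsSkewTent T e r α β) : Continuous T := by
  have hT : T = fun x => if x ≤ r then e + α * (x - e) else T r - β * (x - r) := by
    funext x
    split_ifs with hx
    · exact h.eq_of_le x hx
    · exact h.eq_of_ge x (le_of_not_ge hx)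
  rw [hT]
  refine Continuous.if_le (by fun_prop) (by fun_prop) continuous_id continuous_const ?_
  rintro x rfl
  rw [h.eq_of_le x le_rfl]
  ring

theorem monotoneOn (h : IsSkewTent T e r α β) (hα : 0 ≤ α) : MonotoneOn T (Iic r) :=
  fun x hx y hy hxy => by
    rw [h.eq_of_le x hx, h.eq_of_le y hy]
    gcongr

theorem antitoneOn (h : IsSkewTent T e r α β) (hβ : 0 ≤ β) : AntitoneOn T (Ici r) :=
  fun x hx y hy hxy => by
    rw [h.eq_of_ge x hx, h.eq_of_ge y hy]
    gcongr

theorem image_Icc_of_le {c d : ℝ} (h : IsSkewTent T e r α β) (hα : 0 ≤ α) (hcd : c ≤ d)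
    (hdr : d ≤ r) : T '' Icc c d = Icc (T c) (T d) :=
  h.continuous.continuousOn.image_Icc_of_monotoneOn hcd
    ((h.monotoneOn hα).mono (Icc_subset_Iic_self.trans (Iic_subset_Iic.2 hdr)))

theorem image_Icc_of_ge {c d : ℝ} (h : IsSkewTent T e r α β) (hβ : 0 ≤ β) (hrc : r ≤ c)
    (hcd : c ≤ d) : T '' Icc c d = Icc (T d) (T c) :=
  h.continuous.continuousOn.image_Icc_of_antitoneOn hcd
    ((h.antitoneOn hβ).mono (Icc_subset_Ici_self.trans (Ici_subset_Ici.2 hrc)))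

theorem image_Icc_of_mem {c d : ℝ} (h : IsSkewTent T e r α β) (hα : 0 ≤ α) (hβ : 0 ≤ β)
    (hcr : c ≤ r) (hrd : r ≤ d) : T '' Icc c d = Icc (min (T c) (T d)) (T r) := by
  have hc : T c ≤ T r := h.monotoneOn hα hcr self_mem_Iic hcr
  have hd : T d ≤ T r := h.antitoneOn hβ self_mem_Ici hrd hrd
  rw [← Icc_union_Icc_eq_Icc hcr hrd, image_union, h.image_Icc_of_le hα hcr le_rfl,
    h.image_Icc_of_ge hβ le_rfl hrd, Icc_union_Icc' hd hc, max_self]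

theorem le_apply (h : IsSkewTent T e r α β) (hα : 1 ≤ α) {x : ℝ} (hex : e ≤ x) (hxr : x ≤ r) :
    x ≤ T x := by
  rw [h.eq_of_le x hxr]
  nlinarith

theorem center_lt_apply (h : IsSkewTent T e r α β) (her : e < r) (hα : 1 < α) : r < T r := by
  rw [h.eq_of_le r le_rfl]
  nlinarith

theorem apply_apply_lt_center (h : IsSkewTent T e r α β) (hβ : 1 < β) (hr : r < T r) :
    T (T r) < r := by
  rw [h.eq_of_ge (T r) hr.le]
  nlinarith

theorem lt_apply_apply_center (h : IsSkewTent T e r α β) (her : e < r) (hα : 1 ≤ α)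
    (hβ : 0 < β) (hσ : 1 < 1 / α + 1 / β) : e < T (T r) := by
  have hTr := h.eq_of_le r le_rfl
  have hαβ : α * β < α + β := by
    have := mul_lt_mul_of_pos_left hσ (mul_pos (by linarith : 0 < α) hβ)
    field_simp at this
    linarith
  rw [h.eq_of_ge (T r) (by rw [hTr]; nlinarith), hTr]
  nlinarith [mul_pos (sub_pos.2 hαβ) (sub_pos.2 her)]

theorem image_core (h : IsSkewTent T e r α β) (hα : 1 ≤ α) (hβ : 0 ≤ β) (he : e ≤ T (T r))
    (hTTr : T (T r) ≤ r) (hr : r ≤ T r) : T '' Icc (T (T r)) (T r) = Icc (T (T r)) (T r) := by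
  rw [h.image_Icc_of_mem (by linarith) hβ hTTr hr, min_eq_right (h.le_apply hα he hTTr)]

theorem mapsTo_core (h : IsSkewTent T e r α β) (hα : 1 ≤ α) (hβ : 0 ≤ β) (he : e ≤ T (T r))
    (hTTr : T (T r) ≤ r) (hr : r ≤ T r) : MapsTo T (Icc (T (T r)) (T r)) (Icc (T (T r)) (T r)) :=
  (mapsTo_image T _).mono_right (h.image_core hα hβ he hTTr hr).subset

theorem image_iterate_two_of_mem (h : IsSkewTent T e r α β) (hα : 1 ≤ α) (hβ : 0 < β)
    (he : e ≤ T (T r)) (hTTr : T (T r) ≤ r) (hr : r ≤ T r) {μ a b : ℝ} (hμ : 0 ≤ μ)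
    (hμσ : μ * (1 / α + 1 / β) ≤ β) (ha : T (T r) ≤ a) (har : a ≤ r) (hrb : r ≤ b)
    (hb : b ≤ T r) :
    T^[2] '' Icc a b = Icc (T (T r)) (T r) ∨ ∃ a' b', T (T r) ≤ a' ∧ b' ≤ T r ∧
      μ * (b - a) ≤ b' - a' ∧ T^[2] '' Icc a b = Icc a' b' := by
  have hmaps := h.mapsTo_core hα hβ.le he hTTr hr
  set m := min (T a) (T b)
  have hTa := hmaps ⟨ha, har.trans hr⟩
  have hTb := hmaps ⟨hTTr.trans hrb, hb⟩
  have hmG : m ∈ Icc (T (T r)) (T r) := ⟨le_min hTa.1 hTb.1, (min_le_left _ _).trans hTa.2⟩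
  have himage : T^[2] '' Icc a b = T '' Icc m (T r) := by
    rw [iterate_succ, iterate_one, image_comp, h.image_Icc_of_mem (by linarith) hβ.le har hrb]
  rcases le_or_gt m r with hmr | hrm
  · left
    rw [himage, h.image_Icc_of_mem (by linarith) hβ.le hmr hr,
      min_eq_right (hmG.1.trans (h.le_apply hα (he.trans hmG.1) hmr))]
  right
  refine ⟨T (T r), T m, le_rfl, (hmaps hmG).2, ?_, by
    rw [himage, h.image_Icc_of_ge hβ.le hrm.le hmG.2]⟩
  have hlen : b - a ≤ (1 / α + 1 / β) * (T r - m) := by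
    have hra : r - a ≤ (T r - m) / α := by
      rw [le_div_iff₀ (by linarith), h.eq_of_le r le_rfl]
      linarith [min_le_left (T a) (T b), h.eq_of_le a har]
    have hbr : b - r ≤ (T r - m) / β := by
      rw [le_div_iff₀ hβ]
      linarith [min_le_right (T a) (T b), h.eq_of_ge b hrb]
    calc b - a = (r - a) + (b - r) := by ring
      _ ≤ (T r - m) / α + (T r - m) / β := add_le_add hra hbr
      _ = (1 / α + 1 / β) * (T r - m) := by ring
  calc μ * (b - a) ≤ μ * (1 / α + 1 / β) * (T r - m) := by rw [mul_assoc]; gcongr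
    _ ≤ β * (T r - m) := by gcongr; linarith [hmG.2]
    _ = T m - T (T r) := by rw [h.eq_of_ge m hrm.le, h.eq_of_ge (T r) hr]; ring

theorem expanding (h : IsSkewTent T e r α β) (hα : 1 ≤ α) (hβ : 0 < β) (he : e ≤ T (T r))
    (hTTr : T (T r) ≤ r) (hr : r ≤ T r) {μ : ℝ} (hμ : 0 ≤ μ) (hμα : μ ≤ α) (hμβ : μ ≤ β)
    (hμσ : μ * (1 / α + 1 / β) ≤ β) (a b : ℝ) (ha : T (T r) ≤ a) (hab : a < b) (hb : b ≤ T r) :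
    (∃ m : ℕ, T^[m] '' Icc a b = Icc (T (T r)) (T r)) ∨
      ∃ (k : ℕ) (a' b' : ℝ), T (T r) ≤ a' ∧ b' ≤ T r ∧ μ * (b - a) ≤ b' - a' ∧
        T^[k] '' Icc a b = Icc a' b' := by
  have hmaps := h.mapsTo_core hα hβ.le he hTTr hr
  have hTa := hmaps ⟨ha, hab.le.trans hb⟩
  have hTb := hmaps ⟨ha.trans hab.le, hb⟩
  rcases le_or_gt b r with hbr | hrb
  · refine Or.inr ⟨1, T a, T b, hTa.1, hTb.2, ?_, by
      rw [iterate_one, h.image_Icc_of_le (by linarith) hab.le hbr]⟩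
    rw [h.eq_of_le a (hab.le.trans hbr), h.eq_of_le b hbr]
    nlinarith
  rcases le_or_gt r a with hra | har
  · refine Or.inr ⟨1, T b, T a, hTb.1, hTa.2, ?_, by
      rw [iterate_one, h.image_Icc_of_ge hβ.le hra hab.le]⟩
    rw [h.eq_of_ge a hra, h.eq_of_ge b (hra.trans hab.le)]
    nlinarith
  rcases h.image_iterate_two_of_mem hα hβ he hTTr hr hμ hμσ ha har.le hrb.le hb with
    honto | hexp
  · exact Or.inl ⟨2, honto⟩
  · exact Or.inr ⟨2, hexp⟩

end IsSkewTent

/-- Skew tent map with `β > 1`, `1/α + 1/β > 1` and `(1/β)(1/α + 1/β) < 1`: every closed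
subinterval of `G = [T p, p]` with nonempty interior is mapped onto `G` by some iterate of
`T`; consequently `G` is a chaotic invariant set for `T`. -/
theorem skew_tent_locally_eventually_onto
    (e r α β p : ℝ) (T : ℝ → ℝ)
    (her : e < r) (hα : 1 < α) (hβ : 1 < β)
    (hslope : 1 < 1 / α + 1 / β)
    (hslope2 : (1 / β) * (1 / α + 1 / β) < 1)
    (hp : p = e + α * (r - e))
    (hT1 : ∀ x ≤ r, T x = e + α * (x - e))
    (hT2 : ∀ x ≥ r, T x = p - β * (x - r)) :
    (∀ a b : ℝ, T p ≤ a → a < b → b ≤ p →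
      ∃ m : ℕ, T^[m] '' Set.Icc a b = Set.Icc (T p) p) ∧
    IsChaoticInvariantSet T (Set.Icc (T p) p) := by
  obtain rfl : T r = p := by rw [hT1 r le_rfl, hp]
  have h : IsSkewTent T e r α β := ⟨hT1, hT2⟩
  have hβ0 : 0 < β := by linarith
  have hr := h.center_lt_apply her hα
  have hTTr := h.apply_apply_lt_center hβ hr
  have he := h.lt_apply_apply_center her hα.le hβ0 hslope
  set σ := 1 / α + 1 / β
  have hσβ : σ < β := by rwa [one_div_mul_eq_div, div_lt_one hβ0] at hslope2
  set μ := min α (β / σ)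
  have hμ : 1 < μ := lt_min hα ((one_lt_div (by linarith)).2 hσβ)
  have hμσ : μ * σ ≤ β := (le_div_iff₀ (by linarith)).1 (min_le_right _ _)
  have hμβ : μ ≤ β := (min_le_right _ _).trans (div_le_self hβ0.le hslope.le)
  have hleo : LocallyEventuallyOnto T (T (T r)) (T r) := locallyEventuallyOnto_of_expanding hμ
    (h.expanding hα.le hβ0 he.le hTTr.le hr.le (by linarith) (min_le_left _ _) hμβ hμσ)
  exact ⟨hleo, hleo.isChaoticInvariantSet h.continuous (hTTr.trans hr)
    (h.image_core hα.le hβ0.le he.le hTTr.le hr.le)⟩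
end

section
/- Under the skew tent map setup, assume β > 1 and (1/β)·(1/α + 1/β) > 1 (equivalently 1/β² + 1/(αβ) > 1). Then the segment J' := [ê, p] satisfies T(J') = [T(p), ê], so T(J') ∩ J' = {ê}, and J' is invariant under the second iterate: T²(J') ⊆ J'. Moreover, the restriction of T² to J' is piecewise affine with exactly two slopes, β² on the increasing branch and −αβ on the decreasing branch. -/
/-!
On `[r, ∞)` the map `T` is affine of slope `-β`, on `(-∞, r]` affine of slope `α`, so `T ∘ T` is
affine of slope `β²` wherever `T` stays to the right of `r` and of slope `-αβ` wherever `T` crosses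
to the left. On `J' = [ê, p]` the crossing happens at the preimage `v = r + (p - r) / β` of `r`:
`T ∘ T` rises from `ê` to `T r = p` on `[ê, v]` and falls from `p` to
`T (T p) = p - α (β - 1) (p - r)` on `[v, p]`. The slope hypothesis is exactly `α β² < α + β`,
which keeps this last value above `ê`.
-/

open Set

lemma mapsTo_Icc_of_monotoneOn_of_antitoneOn {X : Type*} [LinearOrder X] {f : X → X} {a v b : X}
    (hmono : MonotoneOn f (Icc a v)) (hanti : AntitoneOn f (Icc v b))
    (ha : a ≤ f a) (hv : f v ≤ b) (hb : a ≤ f b) : MapsTo f (Icc a b) (Icc a b) := by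
  rintro x ⟨hax, hxb⟩
  rcases le_total x v with hxv | hvx
  · obtain ⟨h₁, h₂⟩ := hmono.mapsTo_Icc ⟨hax, hxv⟩
    exact ⟨ha.trans h₁, h₂.trans hv⟩
  · obtain ⟨h₁, h₂⟩ := hanti.mapsTo_Icc ⟨hvx, hxb⟩
    exact ⟨hb.trans h₁, h₂.trans hv⟩

namespace SkewTent

variable {e r α β p : ℝ} {T : ℝ → ℝ}

lemma map_sub_map_of_le (hT1 : ∀ x ≤ r, T x = e + α * (x - e)) {x y : ℝ}
    (hx : x ≤ r) (hy : y ≤ r) : T x - T y = α * (x - y) := by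
  rw [hT1 x hx, hT1 y hy]; ring

lemma map_sub_map_of_ge (hT2 : ∀ x ≥ r, T x = p - β * (x - r)) {x y : ℝ}
    (hx : r ≤ x) (hy : r ≤ y) : T x - T y = -β * (x - y) := by
  rw [hT2 x hx, hT2 y hy]; ring

lemma monotoneOn_Iic (hT1 : ∀ x ≤ r, T x = e + α * (x - e)) (hα : 0 ≤ α) :
    MonotoneOn T (Iic r) := fun x hx y hy hxy => by
  have := map_sub_map_of_le hT1 hy hx
  nlinarith

lemma antitoneOn_Ici (hT2 : ∀ x ≥ r, T x = p - β * (x - r)) (hβ : 0 ≤ β) :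
    AntitoneOn T (Ici r) := fun x hx y hy hxy => by
  have := map_sub_map_of_ge hT2 hx hy
  nlinarith

lemma continuousOn_Ici (hT2 : ∀ x ≥ r, T x = p - β * (x - r)) : ContinuousOn T (Ici r) :=
  (by fun_prop : Continuous fun x => p - β * (x - r)).continuousOn.congr fun x hx => hT2 x hx

lemma image_Icc_of_ge (hT2 : ∀ x ≥ r, T x = p - β * (x - r)) (hβ : 0 ≤ β) {a b : ℝ}
    (hra : r ≤ a) (hab : a ≤ b) : T '' Icc a b = Icc (T b) (T a) :=
  have hsub : Icc a b ⊆ Ici r := fun _ hx => hra.trans hx.1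
  ((continuousOn_Ici hT2).mono hsub).image_Icc_of_antitoneOn hab
    ((antitoneOn_Ici hT2 hβ).mono hsub)

lemma lt_map_of_le (hT1 : ∀ x ≤ r, T x = e + α * (x - e)) (hα : 1 < α) {x : ℝ}
    (hex : e < x) (hxr : x ≤ r) : x < T x := by
  rw [hT1 x hxr]; nlinarith

lemma map_map_eq_add_of_map_ge (hT2 : ∀ x ≥ r, T x = p - β * (x - r)) {x y : ℝ}
    (hx : r ≤ x) (hy : r ≤ y) (hTx : r ≤ T x) (hTy : r ≤ T y) :
    T (T x) = T (T y) + β ^ 2 * (x - y) := by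
  have := map_sub_map_of_ge hT2 hTx hTy
  rw [map_sub_map_of_ge hT2 hx hy] at this
  linarith

lemma map_map_eq_sub_of_map_le (hT1 : ∀ x ≤ r, T x = e + α * (x - e))
    (hT2 : ∀ x ≥ r, T x = p - β * (x - r)) {x y : ℝ}
    (hx : r ≤ x) (hy : r ≤ y) (hTx : T x ≤ r) (hTy : T y ≤ r) :
    T (T x) = T (T y) - α * β * (x - y) := by
  have := map_sub_map_of_le hT1 hTx hTy
  rw [map_sub_map_of_ge hT2 hx hy] at this
  linarith

lemma mul_sq_lt_add_of_one_lt (hα : 0 < α) (hβ : 0 < β) (hslope : 1 < 1 / β * (1 / α + 1 / β)) :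
    α * β ^ 2 < α + β := by
  have : 1 / β * (1 / α + 1 / β) = (α + β) / (α * β ^ 2) := by field_simp; ring
  rwa [this, one_lt_div (by positivity)] at hslope

lemma fixedPt_mem_Ioo (hβ : 0 < β) (hrp : r < p) : (p + β * r) / (1 + β) ∈ Ioo r p := by
  constructor
  · rw [lt_div_iff₀ (by positivity)]; linarith
  · rw [div_lt_iff₀ (by positivity)]; nlinarith

lemma map_fixedPt (hT2 : ∀ x ≥ r, T x = p - β * (x - r)) (hβ : 0 < β) (hrp : r < p) :
    T ((p + β * r) / (1 + β)) = (p + β * r) / (1 + β) := by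
  rw [hT2 _ (fixedPt_mem_Ioo hβ hrp).1.le]
  field_simp
  ring

lemma fixedPt_lt_preimage (hβ : 0 < β) (hrp : r < p) :
    (p + β * r) / (1 + β) < r + (p - r) / β := by
  have : (p + β * r) / (1 + β) = r + (p - r) / (1 + β) := by field_simp; ring
  rw [this, add_lt_add_iff_left]
  exact div_lt_div_of_pos_left (by linarith) hβ (by linarith)

lemma preimage_lt (hβ : 1 < β) (hrp : r < p) : r + (p - r) / β < p := by
  have := div_lt_self (sub_pos.2 hrp) hβ
  linarith

lemma map_preimage (hT2 : ∀ x ≥ r, T x = p - β * (x - r)) (hβ : 0 < β) (hrp : r < p) :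
    T (r + (p - r) / β) = r := by
  rw [hT2 _ (le_add_of_nonneg_right (div_nonneg (sub_pos.2 hrp).le hβ.le))]
  field_simp
  ring

lemma map_map_peak (hT1 : ∀ x ≤ r, T x = e + α * (x - e))
    (hT2 : ∀ x ≥ r, T x = p - β * (x - r)) (hβ : 1 ≤ β) (hrp : r ≤ p) :
    T (T p) = p - α * (β - 1) * (p - r) := by
  have hTp : T p = r - (β - 1) * (p - r) := by rw [hT2 p hrp]; ring
  have hTp_le : T p ≤ r := by rw [hTp]; nlinarith
  have hTr : T r = p := by simpa using hT2 r le_rfl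
  have := map_sub_map_of_le hT1 hTp_le le_rfl
  rw [hTr] at this
  linear_combination this + α * hTp

lemma fixedPt_le_map_map_peak (hT1 : ∀ x ≤ r, T x = e + α * (x - e))
    (hT2 : ∀ x ≥ r, T x = p - β * (x - r)) (hα : 0 < α) (hβ : 1 ≤ β) (hrp : r ≤ p)
    (hslope : 1 < 1 / β * (1 / α + 1 / β)) :
    (p + β * r) / (1 + β) ≤ T (T p) := by
  have := mul_sq_lt_add_of_one_lt hα (by linarith) hslope
  rw [map_map_peak hT1 hT2 hβ hrp, div_le_iff₀ (by linarith)]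
  nlinarith [mul_nonneg (sub_nonneg.2 this.le) (sub_nonneg.2 hrp)]

end SkewTent

open SkewTent

theorem skew_tent_second_iterate_general
    (e r α β p ehat : ℝ) (T : ℝ → ℝ)
    (her : e < r) (hα : 1 < α) (hβ : 1 < β)
    (hslope : 1 < (1 / β) * (1 / α + 1 / β))
    (hehat : ehat = (p + β * r) / (1 + β))
    (hT1 : ∀ x ≤ r, T x = e + α * (x - e))
    (hT2 : ∀ x ≥ r, T x = p - β * (x - r)) :
    T '' Set.Icc ehat p = Set.Icc (T p) ehat ∧
    (T '' Set.Icc ehat p) ∩ Set.Icc ehat p = {ehat} ∧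
    Set.MapsTo (fun x => T (T x)) (Set.Icc ehat p) (Set.Icc ehat p) ∧
    ∃ v : ℝ, v ∈ Set.Ioo ehat p ∧ T v = r ∧
      (∀ x ∈ Set.Icc ehat v, T (T x) = T (T ehat) + β ^ 2 * (x - ehat)) ∧
      (∀ x ∈ Set.Icc v p, T (T x) = T (T v) - (α * β) * (x - v)) := by
  have hβ0 : 0 < β := by linarith
  have hTr : T r = p := by simpa using hT2 r le_rfl
  have hrp : r < p := hTr ▸ lt_map_of_le hT1 hα her le_rfl
  obtain ⟨hre, hep⟩ : ehat ∈ Ioo r p := hehat ▸ fixedPt_mem_Ioo hβ0 hrp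
  have hfix : T ehat = ehat := hehat ▸ map_fixedPt hT2 hβ0 hrp
  set v := r + (p - r) / β
  have hev : ehat < v := hehat ▸ fixedPt_lt_preimage hβ0 hrp
  have hvp : v < p := preimage_lt hβ hrp
  have hTv : T v = r := map_preimage hT2 hβ0 hrp
  have hJ : Icc ehat p ⊆ Ici r := fun x hx => hre.le.trans hx.1
  have hJl : Icc ehat v ⊆ Ici r := (Icc_subset_Icc_right hvp.le).trans hJ
  have hJr : Icc v p ⊆ Ici r := (Icc_subset_Icc_left hev.le).trans hJ
  have hanti := antitoneOn_Ici hT2 hβ0.le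
  have hleft : MapsTo T (Icc ehat v) (Ici r) := fun x hx =>
    hTv ▸ hanti (hJl hx) (hJl (right_mem_Icc.2 hev.le)) hx.2
  have hright : MapsTo T (Icc v p) (Iic r) := fun x hx =>
    hTv ▸ hanti (hJr (left_mem_Icc.2 hvp.le)) (hJr hx) hx.1
  have himage : T '' Icc ehat p = Icc (T p) ehat := by
    rw [image_Icc_of_ge hT2 hβ0.le hre.le hep.le, hfix]
  refine ⟨himage, ?_, ?_, v, ⟨hev, hvp⟩, hTv, fun x hx => ?_, fun x hx => ?_⟩
  · rw [himage]
    exact Icc_inter_Icc_eq_singleton (hfix ▸ hanti (hJ (left_mem_Icc.2 hep.le))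
      (hJ (right_mem_Icc.2 hep.le)) hep.le) hep.le
  · exact mapsTo_Icc_of_monotoneOn_of_antitoneOn (hanti.comp (hanti.mono hJl) hleft)
      ((monotoneOn_Iic hT1 (by linarith)).comp_AntitoneOn (hanti.mono hJr) hright)
      (by rw [hfix, hfix]) (by rw [hTv, hTr])
      (hehat ▸ fixedPt_le_map_map_peak hT1 hT2 (by linarith) hβ.le hrp.le hslope)
  · exact map_map_eq_add_of_map_ge hT2 (hJl hx) hre.le (hleft hx)
      (hfix.symm ▸ hre.le)
  · exact map_map_eq_sub_of_map_le hT1 hT2 (hJr hx) (hJr (left_mem_Icc.2 hvp.le)) (hright hx)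
      hTv.le

/-- Skew tent map with `β > 1` and `(1/β)(1/α + 1/β) > 1`: the segment `J' = [ê, p]`
satisfies `T(J') = [T p, ê]` (so `T(J') ∩ J' = {ê}`), `J'` is invariant under `T²`, and the
restriction of `T²` to `J'` is piecewise affine with exactly two slopes: `β²` on the
increasing branch and `-αβ` on the decreasing branch. -/
theorem skew_tent_second_iterate
    (e r α β p ehat : ℝ) (T : ℝ → ℝ)
    (her : e < r) (hα : 1 < α) (hβ : 1 < β)
    (hslope : 1 < (1 / β) * (1 / α + 1 / β))
    (hp : p = e + α * (r - e))
    (hehat : ehat = (p + β * r) / (1 + β))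
    (hT1 : ∀ x ≤ r, T x = e + α * (x - e))
    (hT2 : ∀ x ≥ r, T x = p - β * (x - r)) :
    T '' Set.Icc ehat p = Set.Icc (T p) ehat ∧
    (T '' Set.Icc ehat p) ∩ Set.Icc ehat p = {ehat} ∧
    Set.MapsTo (fun x => T (T x)) (Set.Icc ehat p) (Set.Icc ehat p) ∧
    ∃ v : ℝ, v ∈ Set.Ioo ehat p ∧ T v = r ∧
      (∀ x ∈ Set.Icc ehat v, T (T x) = T (T ehat) + β ^ 2 * (x - ehat)) ∧
      (∀ x ∈ Set.Icc v p, T (T x) = T (T v) - (α * β) * (x - v)) :=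
  skew_tent_second_iterate_general e r α β p ehat T her hα hβ hslope hehat hT1 hT2
end
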